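/- Let p be a prime and let C be a clone on Z_p which contains +, such that C is not contained in Aff(Z_p) and every operation of C preserves the unary relation {0}. Let R be the set of all automorphisms of the group (Z_p, +) that are preserved by every operation in C. If g is a finitary operation on Z_p that preserves every π ∈ R and preserves {0}, then g ∈ C. -/

import Mathlib

/-- A finitary operation on `A`: an element of arity `n + 1` (so every arity is `≥ 1`). -/
abbrev Ops (A : Type) := Σ n : ℕ, ((Fin (n + 1) → A) → A)

/-- The product `E·F` of two sets of finitary operations:
all compositions `f ∘ (g₁, …, gₙ)` with `f ∈ E` and all `gᵢ ∈ F` of a common arity. -/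
def OpProd {A : Type} (E F : Set (Ops A)) : Set (Ops A) :=
  { h | ∃ (n m : ℕ) (f : (Fin (n + 1) → A) → A) (g : Fin (n + 1) → (Fin (m + 1) → A) → A),
      (⟨n, f⟩ : Ops A) ∈ E ∧ (∀ i, (⟨m, g i⟩ : Ops A) ∈ F) ∧
      h = ⟨m, fun x => f (fun i => g i x)⟩ }

/-- The set `Lin(Z_p)` of linear operations `(x₁, …, xₙ) ↦ Σ aᵢ xᵢ` on `ZMod p`. -/
def LinOps (p : ℕ) : Set (Ops (ZMod p)) :=
  { h | ∃ (n : ℕ) (a : Fin (n + 1) → ZMod p), h = ⟨n, fun x => ∑ i, a i * x i⟩ }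

/-- A linearly closed clonoid on `ZMod p`. -/
def IsLCC (p : ℕ) (C : Set (Ops (ZMod p))) : Prop :=
  C.Nonempty ∧ OpProd (LinOps p) C ⊆ C ∧ OpProd C (LinOps p) ⊆ C

/-- The sum `D₁ + D₂` of two sets of operations on `ZMod p`. -/
def LCCsum (p : ℕ) (D₁ D₂ : Set (Ops (ZMod p))) : Set (Ops (ZMod p)) :=
  { h | ∃ (n : ℕ) (f g : (Fin (n + 1) → ZMod p) → ZMod p),
      (⟨n, f⟩ : Ops (ZMod p)) ∈ D₁ ∧ (⟨n, g⟩ : Ops (ZMod p)) ∈ D₂ ∧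
      h = ⟨n, fun x => f x + g x⟩ }

/-- The linearly closed clonoid on `ZMod p` generated by a set `F` of operations. -/
def genLC (p : ℕ) (F : Set (Ops (ZMod p))) : Set (Ops (ZMod p)) :=
  ⋂₀ { C | IsLCC p C ∧ F ⊆ C }

/-- A finitely generated linearly closed clonoid on `ZMod p`. -/
def FinGenLCC (p : ℕ) (C : Set (Ops (ZMod p))) : Prop :=
  ∃ F : Set (Ops (ZMod p)), F.Finite ∧ C = genLC p F

/-- A `p`-minor subset of `ℕ`. -/
def IsPMinor (p : ℕ) (M : Set ℕ) : Prop :=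
  ∀ n ∈ M, n > p - 1 → n - (p - 1) ∈ M

/-- A reduced polynomial: every variable exponent is at most `p - 1`. -/
def IsReducedPoly (p : ℕ) (f : MvPolynomial ℕ (ZMod p)) : Prop :=
  ∀ d ∈ f.support, ∀ i, d i ≤ p - 1

/-- The `(n+1)`-ary operation on `ZMod p` induced by a polynomial
(meaningful when all variables of `f` have index `< n + 1`). -/
noncomputable def inducedOp (p n : ℕ) (f : MvPolynomial ℕ (ZMod p)) : (Fin (n + 1) → ZMod p) → ZMod p :=
  fun x => MvPolynomial.eval (fun i => if h : i < n + 1 then x ⟨i, h⟩ else 0) f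

/-- `𝒞(M)`: all constant-zero operations together with all operations induced by a nonzero
reduced polynomial each of whose monomials has total degree in `M`. -/
def CM (p : ℕ) (M : Set ℕ) : Set (Ops (ZMod p)) :=
  { h | ∃ n : ℕ, h = ⟨n, fun _ => 0⟩ } ∪
  { h | ∃ (n : ℕ) (f : MvPolynomial ℕ (ZMod p)), f ≠ 0 ∧ IsReducedPoly p f ∧
      (∀ i ∈ f.vars, i < n + 1) ∧ (∀ d ∈ f.support, (d.sum fun _ e => e) ∈ M) ∧
      h = ⟨n, inducedOp p n f⟩ }

/-- `𝒫(M)`: polynomials each of whose monomials has total degree in `M` (this includes `0`). -/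
def PM (p : ℕ) (M : Set ℕ) : Set (MvPolynomial ℕ (ZMod p)) :=
  { f | ∀ d ∈ f.support, (d.sum fun _ e => e) ∈ M }

/-- The set `L` of linear polynomials `Σ aᵢ xᵢ`. -/
def LinPoly (p : ℕ) : Set (MvPolynomial ℕ (ZMod p)) :=
  { f | ∃ (s : Finset ℕ) (a : ℕ → ZMod p),
      f = ∑ i ∈ s, MvPolynomial.C (a i) * MvPolynomial.X i }

/-- The product `A·B` of two sets of polynomials: substitute members of `B` for the
variables of a member of `A` (regarded as `n`-ary). -/
def PolyProd (p : ℕ) (A B : Set (MvPolynomial ℕ (ZMod p))) :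
    Set (MvPolynomial ℕ (ZMod p)) :=
  { h | ∃ (n : ℕ) (f : MvPolynomial ℕ (ZMod p)) (g : ℕ → MvPolynomial ℕ (ZMod p)),
      f ∈ A ∧ (∀ i ∈ f.vars, i < n) ∧ (∀ i < n, g i ∈ B) ∧ h = MvPolynomial.aeval g f }

/-- A polynomial linearly closed clonoid. -/
def IsPLC (p : ℕ) (C : Set (MvPolynomial ℕ (ZMod p))) : Prop :=
  C.Nonempty ∧ PolyProd p (LinPoly p) C ⊆ C ∧ PolyProd p C (LinPoly p) ⊆ C

/-- The polynomial linearly closed clonoid generated by `F`. -/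
def genPLC (p : ℕ) (F : Set (MvPolynomial ℕ (ZMod p))) : Set (MvPolynomial ℕ (ZMod p)) :=
  ⋂₀ { C | IsPLC p C ∧ F ⊆ C }

/-- A clone on `A`: contains all projections and is closed under composition. -/
def IsClone {A : Type} (C : Set (Ops A)) : Prop :=
  (∀ (n : ℕ) (j : Fin (n + 1)), (⟨n, fun x => x j⟩ : Ops A) ∈ C) ∧ OpProd C C ⊆ C

/-- The clone generated by a set of operations. -/
def cloneGen {A : Type} (F : Set (Ops A)) : Set (Ops A) :=
  ⋂₀ { C | IsClone C ∧ F ⊆ C }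

/-- A finitely generated clone. -/
def FinGenClone {A : Type} (C : Set (Ops A)) : Prop :=
  ∃ F : Set (Ops A), F.Finite ∧ C = cloneGen F

/-- The binary addition operation, as a finitary operation. -/
def plusOp (A : Type) [Add A] : Ops A := ⟨1, fun x => x 0 + x 1⟩

/-- The set of all projections. -/
def ProjOps (A : Type) : Set (Ops A) :=
  { h | ∃ (n : ℕ) (j : Fin (n + 1)), h = ⟨n, fun x => x j⟩ }

/-- A linearly closed iterative algebra on `ZMod p`. -/
def IsLCIA (p : ℕ) (C : Set (Ops (ZMod p))) : Prop :=
  IsLCC p C ∧ OpProd C (C ∪ ProjOps (ZMod p)) ⊆ C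

/-- The clone `Aff(Z_p)` of affine operations `(x₁, …, xₙ) ↦ c + Σ aᵢ xᵢ`. -/
def AffOps (p : ℕ) : Set (Ops (ZMod p)) :=
  { h | ∃ (n : ℕ) (c : ZMod p) (a : Fin (n + 1) → ZMod p),
      h = ⟨n, fun x => c + ∑ i, a i * x i⟩ }

/-- An operation preserves an automorphism `π` of `(ZMod p, +)`. -/
def PreservesAut {p : ℕ} (h : Ops (ZMod p)) (π : AddAut (ZMod p)) : Prop :=
  ∀ x : Fin (h.1 + 1) → ZMod p, h.2 (fun i => π (x i)) = π (h.2 x)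

/-- An operation preserves the unary relation `{0}`. -/
def Preserves0 {p : ℕ} (h : Ops (ZMod p)) : Prop :=
  h.2 (fun _ => 0) = 0

/-- The embedding `φ` of linearly closed clonoids on `ZMod p` into sets of operations
on `ZMod p × ZMod p`. -/
def phiMap (p : ℕ) (C : Set (Ops (ZMod p))) : Set (Ops (ZMod p × ZMod p)) :=
  { h | ∃ (n : ℕ) (l₁ l₂ f : (Fin (n + 1) → ZMod p) → ZMod p),
      (⟨n, l₁⟩ : Ops (ZMod p)) ∈ LinOps p ∧ (⟨n, l₂⟩ : Ops (ZMod p)) ∈ LinOps p ∧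
      (⟨n, f⟩ : Ops (ZMod p)) ∈ C ∧
      h = ⟨n, fun x => (l₁ (fun i => (x i).1) + f (fun i => (x i).2),
                        l₂ (fun i => (x i).2))⟩ }

/-!
Every function `(ZMod p)ⁿ → ZMod p` is a unique linear combination of reduced monomials `x ^ e`
(all `e i < p`), and its `x ^ e`-component is a linear combination of the functions
`x ↦ F (l * x)`. Hence a clone `C` containing `+` contains the monomials of each of its
operations. Polarization (`x_i ↦ x₀ + x_i`, then keep the part linear in `x₀`) and identification
of variables show that the `j` for which `C` contains all monomials of degree `j + 1` form an
additive monoid; since `x ^ p = x` and `C` is not affine, it is `d ℕ` for some `d ∣ p - 1`.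
Multiplication by a unit `a` of order `d` commutes with an operation iff all its monomials have
degree `≡ 1 (mod d)`. The operations of `C` have this property, hence so does `g`; as `g 0 = 0`,
all monomials of `g` have positive degree `≡ 1 (mod d)`, so they lie in `C`, and so does `g`.
-/

open Finset

namespace IsClone

section Arithmetic

variable {A : Type} {C : Set (Ops A)}

theorem comp_mem (hC : IsClone C) {n m : ℕ} {f : (Fin (n + 1) → A) → A}
    {g : Fin (n + 1) → (Fin (m + 1) → A) → A} (hf : ⟨n, f⟩ ∈ C) (hg : ∀ i, ⟨m, g i⟩ ∈ C) :
    (⟨m, fun x => f fun i => g i x⟩ : Ops A) ∈ C :=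
  hC.2 ⟨n, m, f, g, hf, hg, rfl⟩

theorem proj_mem (hC : IsClone C) {n : ℕ} (j : Fin (n + 1)) : (⟨n, fun x => x j⟩ : Ops A) ∈ C :=
  hC.1 n j

theorem comp_proj_mem (hC : IsClone C) {n m : ℕ} {f : (Fin (n + 1) → A) → A} (hf : ⟨n, f⟩ ∈ C)
    (σ : Fin (n + 1) → Fin (m + 1)) : (⟨m, fun x => f (x ∘ σ)⟩ : Ops A) ∈ C :=
  hC.comp_mem hf fun i => hC.proj_mem (σ i)

theorem add_mem [Add A] (hC : IsClone C) (hplus : plusOp A ∈ C) {n : ℕ}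
    {f g : (Fin (n + 1) → A) → A} (hf : ⟨n, f⟩ ∈ C) (hg : ⟨n, g⟩ ∈ C) :
    (⟨n, f + g⟩ : Ops A) ∈ C := by
  convert hC.comp_mem hplus (g := ![f, g]) (Fin.forall_fin_two.mpr ⟨hf, hg⟩) using 2
  rfl

theorem succ_nsmul_mem [AddMonoid A] (hC : IsClone C) (hplus : plusOp A ∈ C) {n : ℕ}
    {f : (Fin (n + 1) → A) → A} (hf : ⟨n, f⟩ ∈ C) (k : ℕ) : (⟨n, (k + 1) • f⟩ : Ops A) ∈ C := by
  induction k with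
  | zero => simpa using hf
  | succ k ih => simpa [succ_nsmul _ (k + 1)] using hC.add_mem hplus ih hf

end Arithmetic

variable {p : ℕ} [NeZero p] {C : Set (Ops (ZMod p))}

/-- Every scalar of `ZMod p` is a positive multiple of `1`, and `0 = p • x₀`. -/
def submodule (hC : IsClone C) (hplus : plusOp (ZMod p) ∈ C) (n : ℕ) :
    Submodule (ZMod p) ((Fin (n + 1) → ZMod p) → ZMod p) where
  carrier := {f | (⟨n, f⟩ : Ops (ZMod p)) ∈ C}
  add_mem' hf hg := hC.add_mem hplus hf hg
  zero_mem' := by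
    have h := hC.succ_nsmul_mem hplus (hC.proj_mem (0 : Fin (n + 1))) (p - 1)
    rw [Nat.sub_add_cancel NeZero.one_le] at h
    show (⟨n, 0⟩ : Ops (ZMod p)) ∈ C
    convert h using 3
    ext x
    simp
  smul_mem' a f hf := by
    obtain ⟨k, rfl⟩ : ∃ k : ℕ, ((k + 1 : ℕ) : ZMod p) = a :=
      ⟨a.val + p - 1, by
        rw [Nat.sub_add_cancel (NeZero.one_le.trans (Nat.le_add_left p a.val))]
        simp⟩
    rw [Nat.cast_smul_eq_nsmul]
    exact hC.succ_nsmul_mem hplus hf k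

theorem mem_submodule (hC : IsClone C) (hplus : plusOp (ZMod p) ∈ C) {n : ℕ}
    {f : (Fin (n + 1) → ZMod p) → ZMod p} : f ∈ hC.submodule hplus n ↔ ⟨n, f⟩ ∈ C :=
  Iff.rfl

end IsClone

section Monomials

variable {R : Type*} {n : ℕ}

def monomialFn [CommMonoid R] (e : Fin n → ℕ) (x : Fin n → R) : R :=
  ∏ i, x i ^ e i

theorem monomialFn_mul [CommMonoid R] (e : Fin n → ℕ) (x y : Fin n → R) :
    monomialFn e (fun i => x i * y i) = monomialFn e x * monomialFn e y := by
  simp only [monomialFn, mul_pow, prod_mul_distrib]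

theorem monomialFn_const [CommMonoid R] (e : Fin n → ℕ) (a : R) :
    monomialFn e (fun _ => a) = a ^ ∑ i, e i :=
  prod_pow_eq_pow_sum _ _ _

theorem monomialFn_cons [CommMonoid R] (k : ℕ) (e : Fin n → ℕ) (x : Fin (n + 1) → R) :
    monomialFn (Fin.cons k e : Fin (n + 1) → ℕ) x = x 0 ^ k * monomialFn e (Fin.tail x) :=
  Fin.prod_univ_succ _

theorem monomialFn_update_add [CommSemiring R] (e : Fin n → ℕ) (i₀ : Fin n) (x : Fin n → R)
    (y : R) :
    monomialFn e (Function.update x i₀ (y + x i₀)) = ∑ k ∈ range (e i₀ + 1),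
      (e i₀).choose k * (y ^ k * monomialFn (Function.update e i₀ (e i₀ - k)) x) := by
  have hsplit (e' : Fin n → ℕ) (x' : Fin n → R) (h : ∀ i ≠ i₀, e' i = e i ∧ x' i = x i) :
      monomialFn e' x' = x' i₀ ^ e' i₀ * ∏ i ∈ univ.erase i₀, x i ^ e i := by
    rw [monomialFn, ← mul_prod_erase univ _ (mem_univ i₀)]
    congr 1
    refine prod_congr rfl fun i hi => ?_
    rw [(h i (ne_of_mem_erase hi)).1, (h i (ne_of_mem_erase hi)).2]
  rw [hsplit e _ fun i hi => ⟨rfl, Function.update_of_ne hi _ _⟩, Function.update_self, add_pow,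
    sum_mul]
  refine sum_congr rfl fun k _ => ?_
  rw [hsplit _ x fun i hi => ⟨Function.update_of_ne hi _ _, rfl⟩, Function.update_self]
  ring

theorem monomialFn_eq_one_add_sum [CommRing R] {e : Fin n → ℕ} (he : ∑ i, e i ≤ 1)
    (x : Fin n → R) : monomialFn e x = 1 + ∑ i, (e i : R) * (x i - 1) := by
  by_cases h0 : ∀ i, e i = 0
  · simp [monomialFn, h0]
  push Not at h0
  obtain ⟨i₀, hi₀⟩ := h0
  have hsplit := add_sum_erase univ e (mem_univ i₀)
  have he₀ : e i₀ = 1 := by omega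
  have hrest : ∀ i ≠ i₀, e i = 0 := fun i hi =>
    sum_eq_zero_iff.mp (by omega) i (mem_erase.mpr ⟨hi, mem_univ i⟩)
  rw [monomialFn, prod_eq_single i₀ (fun i _ hi => by rw [hrest i hi, pow_zero]) (by simp),
    sum_eq_single i₀ (fun i _ hi => by rw [hrest i hi, Nat.cast_zero, zero_mul]) (by simp), he₀]
  ring

theorem exists_fiber_card_eq {k : ℕ} (e : Fin n → ℕ) (he : ∑ i, e i = k) :
    ∃ τ : Fin k → Fin n, ∀ i, #{t | τ t = i} = e i := by
  have hcard : Fintype.card (Σ i, Fin (e i)) = k := by simp [he]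
  let ψ := Fintype.equivFinOfCardEq hcard
  refine ⟨fun t => (ψ.symm t).1, fun i => ?_⟩
  rw [card_equiv ψ.symm (t := {σ | σ.1 = i}) (by simp), card_filter, Fintype.sum_sigma]
  simp [apply_ite]

theorem monomialFn_eq_prod_comp [CommMonoid R] {k : ℕ} {e : Fin n → ℕ} {τ : Fin k → Fin n}
    (hτ : ∀ i, #{t | τ t = i} = e i) (x : Fin n → R) : monomialFn e x = ∏ t, x (τ t) := by
  rw [← prod_fiberwise univ τ]
  refine prod_congr rfl fun i _ => ?_
  rw [prod_congr rfl fun t ht => by rw [(mem_filter.mp ht).2], prod_const, hτ]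

end Monomials

section ReducedCoefficients

variable {p : ℕ} [Fact p.Prime] {n : ℕ}

theorem ZMod.sum_pow (m : ℕ) :
    ∑ t : ZMod p, t ^ m = if m ≠ 0 ∧ p - 1 ∣ m then -1 else 0 := by
  rcases eq_or_ne m 0 with rfl | hm
  · simp
  classical
  calc ∑ t : ZMod p, t ^ m = ∑ t ∈ univ with t ≠ 0, t ^ m :=
        (sum_filter_of_ne fun t _ ht => by rintro rfl; exact ht (zero_pow hm)).symm
    _ = ∑ u : (ZMod p)ˣ, (u : ZMod p) ^ m :=
        (sum_subtype _ (by simp) _).trans (Fintype.sum_equiv unitsEquivNeZero.symm _ _ (by simp))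
    _ = _ := by rw [FiniteField.sum_pow_units, ZMod.card]; simp [hm]

def dualWeight (k : ℕ) (t : ZMod p) : ZMod p :=
  if k = 0 then (if t = 0 then 1 else 0) else -t ^ (p - 1 - k)

theorem sum_dualWeight_mul_pow {k m : ℕ} (hk : k < p) (hm : m < p) :
    ∑ t : ZMod p, dualWeight k t * t ^ m = if m = k then 1 else 0 := by
  unfold dualWeight
  rcases eq_or_ne k 0 with rfl | hk0
  · simp [zero_pow_eq]
  have hp := (Fact.out : p.Prime).two_le
  have key : (p - 1 - k + m ≠ 0 ∧ p - 1 ∣ p - 1 - k + m) ↔ m = k := by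
    refine ⟨fun ⟨hne, c, hc⟩ => ?_, fun h => ⟨by omega, by rw [h, Nat.sub_add_cancel (by omega)]⟩⟩
    obtain rfl : c = 1 := by
      rcases c with _ | _ | c
      · omega
      · rfl
      · have := Nat.lt_of_mul_lt_mul_left (hc ▸ (by omega : p - 1 - k + m < (p - 1) * 2))
        omega
    omega
  simp only [if_neg hk0, neg_mul, sum_neg_distrib, ← pow_add, ZMod.sum_pow, key]
  split_ifs <;> simp

/-- The coefficient of `x ^ e` in the reduced polynomial of `F`, as a linear combination of the
values of `F`. -/
def reducedCoeff (e : Fin n → ℕ) : ((Fin n → ZMod p) → ZMod p) →ₗ[ZMod p] ZMod p where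
  toFun F := ∑ l, (∏ i, dualWeight (e i) (l i)) * F l
  map_add' F G := by simp [mul_add, sum_add_distrib]
  map_smul' a F := by simp [mul_sum, mul_left_comm]

theorem reducedCoeff_apply (e : Fin n → ℕ) (F : (Fin n → ZMod p) → ZMod p) :
    reducedCoeff e F = ∑ l, (∏ i, dualWeight (e i) (l i)) * F l :=
  rfl

theorem reducedCoeff_zero (F : (Fin n → ZMod p) → ZMod p) : reducedCoeff 0 F = F 0 := by
  simp [reducedCoeff_apply, dualWeight, prod_boole, ← funext_iff]
  rfl

theorem reducedCoeff_monomialFn {e E : Fin n → ℕ} (he : ∀ i, e i < p) (hE : ∀ i, E i < p) :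
    reducedCoeff e (monomialFn (R := ZMod p) E) = if E = e then 1 else 0 := by
  simp only [reducedCoeff_apply, monomialFn, ← prod_mul_distrib]
  rw [← Fintype.prod_sum fun i t => dualWeight (e i) t * t ^ E i]
  simp only [sum_dualWeight_mul_pow (he _) (hE _), prod_boole, mem_univ, true_imp_iff, funext_iff]

theorem reducedCoeff_monomialFn_val (e E : Fin n → Fin p) :
    reducedCoeff (fun i => (e i : ℕ)) (monomialFn (R := ZMod p) fun i => (E i : ℕ)) =
      if E = e then 1 else 0 := by
  simp [reducedCoeff_monomialFn, funext_iff, Fin.val_inj]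

/-- The reduced monomials are linearly independent by `reducedCoeff_monomialFn_val`, and there are
as many of them as the dimension of the space of functions. -/
theorem sum_reducedCoeff_smul_monomialFn (F : (Fin n → ZMod p) → ZMod p) :
    ∑ e : Fin n → Fin p, reducedCoeff (fun i => (e i : ℕ)) F • monomialFn (fun i => (e i : ℕ)) =
      F := by
  let Φ := Fintype.linearCombination (ZMod p)
    fun e : Fin n → Fin p => monomialFn (R := ZMod p) fun i => (e i : ℕ)
  have hΦ (c : (Fin n → Fin p) → ZMod p) (e : Fin n → Fin p) :
      reducedCoeff (fun i => (e i : ℕ)) (Φ c) = c e := by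
    simp [Φ, Fintype.linearCombination_apply, reducedCoeff_monomialFn_val]
  have hinj : Function.Injective Φ := fun c c' h => funext fun e => by rw [← hΦ c, h, hΦ]
  obtain ⟨c, rfl⟩ := (LinearMap.injective_iff_surjective_of_finrank_eq_finrank (by simp)).mp hinj F
  simp only [hΦ]
  exact (Fintype.linearCombination_apply _ _ _).symm

theorem eq_sum_reducedCoeff_mul_monomialFn (F : (Fin n → ZMod p) → ZMod p) (x : Fin n → ZMod p) :
    F x = ∑ e : Fin n → Fin p,
      reducedCoeff (fun i => (e i : ℕ)) F * monomialFn (fun i => (e i : ℕ)) x := by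
  conv_lhs => rw [← sum_reducedCoeff_smul_monomialFn F]
  simp

theorem reducedCoeff_comp_mul {e : Fin n → ℕ} (he : ∀ i, e i < p) (F : (Fin n → ZMod p) → ZMod p)
    (x : Fin n → ZMod p) :
    reducedCoeff e (fun y => F fun i => y i * x i) = reducedCoeff e F * monomialFn e x := by
  obtain ⟨e, rfl⟩ : ∃ e' : Fin n → Fin p, (fun i => (e' i : ℕ)) = e := ⟨fun i => ⟨e i, he i⟩, rfl⟩
  have hexp : (fun y => F fun i => y i * x i) = ∑ E : Fin n → Fin p,
      (reducedCoeff (fun i => (E i : ℕ)) F * monomialFn (fun i => (E i : ℕ)) x) •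
        monomialFn fun i => (E i : ℕ) := by
    ext y
    rw [eq_sum_reducedCoeff_mul_monomialFn F (fun i => y i * x i), Finset.sum_apply]
    refine sum_congr rfl fun E _ => ?_
    simp only [Pi.smul_apply, smul_eq_mul, monomialFn_mul]
    ring
  simp [hexp, reducedCoeff_monomialFn_val]

theorem one_le_sum_of_reducedCoeff_ne_zero {F : (Fin n → ZMod p) → ZMod p} (hF : F 0 = 0)
    {e : Fin n → Fin p} (hc : reducedCoeff (fun i => (e i : ℕ)) F ≠ 0) : 1 ≤ ∑ i, (e i : ℕ) := by
  by_contra! h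
  have he : (fun i => (e i : ℕ)) = 0 :=
    funext fun i => sum_eq_zero_iff.mp (Nat.lt_one_iff.mp h) i (mem_univ i)
  rw [he, reducedCoeff_zero, hF] at hc
  exact hc rfl

theorem apply_mul_eq_mul_apply_iff (a : ZMod p) (F : (Fin n → ZMod p) → ZMod p) :
    (∀ x, F (fun i => a * x i) = a * F x) ↔
      ∀ e : Fin n → Fin p, reducedCoeff (fun i => (e i : ℕ)) F ≠ 0 → a ^ ∑ i, (e i : ℕ) = a := by
  constructor
  · intro h e hc
    have := reducedCoeff_comp_mul (fun i => (e i).is_lt) F fun _ => a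
    simp_rw [mul_comm _ a, h, monomialFn_const] at this
    rw [show (fun y => a * F y) = a • F from rfl, map_smul, smul_eq_mul, mul_comm] at this
    exact (mul_left_cancel₀ hc this).symm
  · intro h x
    rw [eq_sum_reducedCoeff_mul_monomialFn F, eq_sum_reducedCoeff_mul_monomialFn F x, mul_sum]
    refine sum_congr rfl fun e _ => ?_
    by_cases hc : reducedCoeff (fun i => (e i : ℕ)) F = 0
    · simp [hc]
    · rw [monomialFn_mul _ (fun _ => a) x, monomialFn_const, h e hc]
      ring

theorem mem_affOps_of_reducedCoeff_ne_zero {F : (Fin (n + 1) → ZMod p) → ZMod p}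
    (hF : ∀ e : Fin (n + 1) → Fin p,
      reducedCoeff (fun i => (e i : ℕ)) F ≠ 0 → ∑ i, (e i : ℕ) ≤ 1) :
    (⟨n, F⟩ : Ops (ZMod p)) ∈ AffOps p := by
  set c := fun e : Fin (n + 1) → Fin p => reducedCoeff (fun i => (e i : ℕ)) F
  have hF' : F = fun x => (∑ e, c e * (1 - ∑ i, ((e i : ℕ) : ZMod p))) +
      ∑ i, (∑ e, c e * ((e i : ℕ) : ZMod p)) * x i := by
    ext x
    calc F x = ∑ e, c e * (1 + ∑ i, ((e i : ℕ) : ZMod p) * (x i - 1)) := by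
          rw [eq_sum_reducedCoeff_mul_monomialFn F x]
          refine sum_congr rfl fun e _ => ?_
          by_cases hc : c e = 0
          · simp only [c] at hc ⊢
            simp [hc]
          · rw [monomialFn_eq_one_add_sum (hF e hc)]
      _ = _ := by
          simp only [mul_add, mul_sub, mul_one, sum_add_distrib, sum_sub_distrib, mul_sum, sum_mul]
          rw [sum_comm (γ := Fin (n + 1))]
          ring_nf
  exact ⟨n, _, _, by rw [hF']⟩

end ReducedCoefficients

namespace IsClone

variable {p : ℕ} [Fact p.Prime] {C : Set (Ops (ZMod p))} {n : ℕ}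

/-- By `reducedCoeff_comp_mul`, `x ↦ reducedCoeff e F * x ^ e` is a linear combination of the
operations `x ↦ F (l * x)`. -/
theorem reducedCoeff_mul_monomialFn_mem (hC : IsClone C) (hplus : plusOp (ZMod p) ∈ C)
    {F : (Fin (n + 1) → ZMod p) → ZMod p} (hF : ⟨n, F⟩ ∈ C) {e : Fin (n + 1) → ℕ}
    (he : ∀ i, e i < p) :
    (⟨n, fun x => reducedCoeff e F * monomialFn e x⟩ : Ops (ZMod p)) ∈ C := by
  have hscale (l : Fin (n + 1) → ZMod p) :
      (⟨n, fun x => F fun i => l i * x i⟩ : Ops (ZMod p)) ∈ C :=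
    hC.comp_mem hF fun i => (hC.submodule hplus n).smul_mem (l i) (hC.proj_mem i)
  have hsum := (hC.submodule hplus n).sum_mem (t := univ) fun l _ =>
    (hC.submodule hplus n).smul_mem (∏ i, dualWeight (e i) (l i)) (hscale l)
  rw [← hC.mem_submodule hplus]
  convert hsum using 1
  ext x
  rw [← reducedCoeff_comp_mul he, reducedCoeff_apply]
  simp

theorem monomialFn_mem_of_reducedCoeff_ne_zero (hC : IsClone C) (hplus : plusOp (ZMod p) ∈ C)
    {F : (Fin (n + 1) → ZMod p) → ZMod p} (hF : ⟨n, F⟩ ∈ C) {e : Fin (n + 1) → ℕ}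
    (he : ∀ i, e i < p) (hc : reducedCoeff e F ≠ 0) :
    (⟨n, monomialFn e⟩ : Ops (ZMod p)) ∈ C := by
  rw [← hC.mem_submodule hplus]
  convert (hC.submodule hplus n).smul_mem (reducedCoeff e F)⁻¹
    (hC.reducedCoeff_mul_monomialFn_mem hplus hF he) using 1
  ext x
  simp [inv_mul_cancel_left₀ hc]

theorem mem_of_forall_reducedCoeff_ne_zero (hC : IsClone C) (hplus : plusOp (ZMod p) ∈ C)
    {F : (Fin (n + 1) → ZMod p) → ZMod p}
    (hF : ∀ e : Fin (n + 1) → Fin p, reducedCoeff (fun i => (e i : ℕ)) F ≠ 0 →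
      (⟨n, monomialFn fun i => (e i : ℕ)⟩ : Ops (ZMod p)) ∈ C) :
    (⟨n, F⟩ : Ops (ZMod p)) ∈ C := by
  rw [← hC.mem_submodule hplus, ← sum_reducedCoeff_smul_monomialFn F]
  refine Submodule.sum_mem _ fun e _ => ?_
  by_cases hc : reducedCoeff (fun i => (e i : ℕ)) F = 0
  · simp [hc]
  · exact Submodule.smul_mem _ _ (hF e hc)

/-- Polarization: substitute `x₀ + x_{i₀}` for `x_{i₀}` and keep the component linear in `x₀`,
whose coefficient `e i₀` is nonzero in `ZMod p`. -/
theorem monomialFn_cons_one_update_mem (hC : IsClone C) (hplus : plusOp (ZMod p) ∈ C)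
    {e : Fin (n + 1) → ℕ} (he : ∀ i, e i < p) {i₀ : Fin (n + 1)} (hi₀ : 1 ≤ e i₀)
    (hmem : (⟨n, monomialFn e⟩ : Ops (ZMod p)) ∈ C) :
    (⟨n + 1, monomialFn (Fin.cons 1 (Function.update e i₀ (e i₀ - 1)))⟩ : Ops (ZMod p)) ∈ C := by
  set E : ℕ → Fin (n + 2) → ℕ := fun k => Fin.cons k (Function.update e i₀ (e i₀ - k))
  have hE : ∀ k ≤ e i₀, ∀ i, E k i < p := fun k hk i => by
    refine Fin.cases (by simp only [E, Fin.cons_zero]; have := he i₀; omega) (fun i => ?_) i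
    simp only [E, Fin.cons_succ]
    rcases eq_or_ne i i₀ with rfl | hi
    · rw [Function.update_self]; have := he i; omega
    · rw [Function.update_of_ne hi]; exact he i
  have hEinj (k : ℕ) (h : E k = E 1) : k = 1 := by
    simpa only [E, Fin.cons_zero] using congrFun h 0
  let F : (Fin (n + 2) → ZMod p) → ZMod p :=
    fun z => monomialFn e (Function.update (Fin.tail z) i₀ (z 0 + Fin.tail z i₀))
  have hF : (⟨n + 1, F⟩ : Ops (ZMod p)) ∈ C := by
    refine hC.comp_mem hmem
      (g := fun i z => Function.update (Fin.tail z) i₀ (z 0 + Fin.tail z i₀) i) fun i => ?_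
    rcases eq_or_ne i i₀ with rfl | hi
    · simp only [Function.update_self]
      exact hC.add_mem hplus (hC.proj_mem 0) (hC.proj_mem i.succ)
    · simp only [Function.update_of_ne hi]
      exact hC.proj_mem i.succ
  have hFexp : F = ∑ k ∈ range (e i₀ + 1), ((e i₀).choose k : ZMod p) • monomialFn (E k) := by
    ext z
    simp only [F, E, monomialFn_update_add, monomialFn_cons, Finset.sum_apply, Pi.smul_apply,
      smul_eq_mul]
  have hcoeff : reducedCoeff (E 1) F = (e i₀ : ZMod p) := by
    rw [hFexp, map_sum, sum_eq_single 1]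
    · simp [reducedCoeff_monomialFn (hE 1 hi₀) (hE 1 hi₀)]
    · intro k hk hk1
      rw [map_smul, reducedCoeff_monomialFn (hE 1 hi₀) (hE k (by simpa [Nat.lt_succ_iff] using hk)),
        if_neg (mt (hEinj k) hk1), smul_zero]
    · intro h
      simp at h
      omega
  refine hC.monomialFn_mem_of_reducedCoeff_ne_zero hplus hF (hE 1 hi₀) ?_
  rw [hcoeff, Ne, ZMod.natCast_eq_zero_iff]
  exact fun h => (Nat.eq_zero_of_dvd_of_lt h (he i₀)).not_gt hi₀

end IsClone

section Products

variable {A : Type} [CommMonoid A] {C : Set (Ops A)}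

/-- `C` contains every product of `j + 1` variables; with this offset the admissible `j` form an
additive monoid. -/
def ContainsProducts (C : Set (Ops A)) (j : ℕ) : Prop :=
  ∀ (n : ℕ) (τ : Fin (j + 1) → Fin (n + 1)), (⟨n, fun x => ∏ t, x (τ t)⟩ : Ops A) ∈ C

namespace ContainsProducts

theorem prod_mem {j k : ℕ} (h : ContainsProducts C j) (hk : k = j + 1) {n : ℕ}
    (τ : Fin k → Fin (n + 1)) : (⟨n, fun x => ∏ t, x (τ t)⟩ : Ops A) ∈ C := by
  subst hk
  exact h n τ

theorem monomialFn_mem {j n : ℕ} (h : ContainsProducts C j) {e : Fin (n + 1) → ℕ}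
    (he : ∑ i, e i = j + 1) : (⟨n, monomialFn e⟩ : Ops A) ∈ C := by
  obtain ⟨τ, hτ⟩ := exists_fiber_card_eq e he
  convert h n τ using 2
  exact funext (monomialFn_eq_prod_comp hτ)

theorem of_add {m : ℕ} (hA : ∀ a : A, a ^ (m + 1) = a) {j : ℕ}
    (h : ContainsProducts C (j + m)) : ContainsProducts C j := by
  intro n τ
  convert h.prod_mem (by omega : j + 1 + m = j + m + 1) (Fin.append τ fun _ => τ 0) using 2
  ext x
  rw [Fin.prod_univ_add (a := j + 1) (b := m)]
  simp only [Fin.append_left, Fin.append_right, prod_const, card_univ, Fintype.card_fin]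
  rw [Fin.prod_univ_succ, mul_right_comm, ← pow_succ', hA]

end ContainsProducts

namespace IsClone

theorem containsProducts_zero (hC : IsClone C) : ContainsProducts C 0 := fun _ τ => by
  simpa using hC.proj_mem (τ 0)

theorem containsProducts_add (hC : IsClone C) {j j' : ℕ} (h : ContainsProducts C j)
    (h' : ContainsProducts C j') : ContainsProducts C (j + j') := by
  intro n τ
  have hk : j' + 1 + j = j + j' + 1 := by omega
  let σ := τ ∘ Fin.cast hk
  let g : Fin (j + 1) → (Fin (n + 1) → A) → A :=
    Fin.cons (fun x => ∏ s : Fin (j' + 1), x (σ (Fin.castAdd j s)))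
      fun t x => x (σ (Fin.natAdd (j' + 1) t))
  have hg : ∀ t, (⟨n, g t⟩ : Ops A) ∈ C := Fin.cases (h' n _) fun t => hC.proj_mem _
  convert hC.comp_mem (h j id) hg using 2
  ext x
  rw [← Fin.prod_congr' _ hk, Fin.prod_univ_add]
  exact (Fin.prod_univ_succ fun t => g t x).symm

def productDegrees (hC : IsClone C) : AddSubmonoid ℕ where
  carrier := {j | ContainsProducts C j}
  add_mem' := hC.containsProducts_add
  zero_mem' := hC.containsProducts_zero

theorem containsProducts_of_monomialFn_mem_of_le_one (hC : IsClone C) {n j : ℕ}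
    {e : Fin (n + 1) → ℕ} (hle : ∀ i, e i ≤ 1) (he : ∑ i, e i = j + 1)
    (hmem : (⟨n, monomialFn e⟩ : Ops A) ∈ C) : ContainsProducts C j := by
  intro m σ
  obtain ⟨τ, hτ⟩ := exists_fiber_card_eq e he
  have hinj : Function.Injective τ := fun t t' htt' =>
    card_le_one.mp ((hτ (τ t)).trans_le (hle _)) t (by simp) t' (by simp [htt'])
  obtain ⟨g, hg⟩ := hinj.hasLeftInverse
  convert hC.comp_proj_mem hmem (σ ∘ g) using 2
  ext x
  simp [monomialFn_eq_prod_comp hτ, hg _]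

end IsClone

end Products

theorem AddSubmonoid.exists_mem_iff_dvd {S : AddSubmonoid ℕ} {m s : ℕ} (hm : 0 < m)
    (hsub : ∀ j, j + m ∈ S → j ∈ S) (hs : s ∈ S) (hs0 : 0 < s) :
    ∃ d, d ∣ m ∧ ∀ j, j ∈ S ↔ d ∣ j := by
  classical
  have hsub_mul (k : ℕ) : ∀ j, j + m * k ∈ S → j ∈ S := by
    induction k with
    | zero => simp
    | succ k ih => exact fun j h => hsub j (ih (j + m) (by convert h using 1; ring))
  have hmul_mem {a : ℕ} (ha : a ∈ S) (k : ℕ) : k * a ∈ S := by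
    simpa using S.nsmul_mem ha k
  have hsub_mem {a b : ℕ} (ha : a ∈ S) (hb : b ∈ S) (hba : b ≤ a) : a - b ∈ S := by
    obtain ⟨m, rfl⟩ := Nat.exists_eq_add_one_of_ne_zero hm.ne'
    refine hsub_mul b _ ?_
    convert S.add_mem ha (hmul_mem hb m) using 1
    rw [add_one_mul]
    omega
  have hd : ∃ d, 0 < d ∧ d ∈ S := ⟨s, hs0, hs⟩
  have hmem (j : ℕ) : j ∈ S ↔ Nat.find hd ∣ j := by
    refine ⟨fun hj => Nat.dvd_of_mod_eq_zero ?_, fun ⟨k, hk⟩ => ?_⟩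
    · by_contra hne
      refine Nat.find_min hd (Nat.mod_lt j (Nat.find_spec hd).1) ⟨Nat.pos_of_ne_zero hne, ?_⟩
      rw [Nat.mod_eq_sub_mul_div, mul_comm]
      exact hsub_mem hj (hmul_mem (Nat.find_spec hd).2 _) (Nat.div_mul_le_self j _)
    · rw [hk, mul_comm]
      exact hmul_mem (Nat.find_spec hd).2 k
  refine ⟨Nat.find hd, (hmem m).mp (hsub_mul (s - 1) m ?_), hmem⟩
  convert hmul_mem hs m using 1
  rw [add_comm, ← mul_add_one, Nat.sub_add_cancel (Nat.one_le_iff_ne_zero.mpr hs0.ne'), mul_comm]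

namespace IsClone

variable {p : ℕ} [Fact p.Prime] {C : Set (Ops (ZMod p))}

/-- Polarize until every exponent is at most `1`; `∑ i, (e i - 1)` drops at each step. -/
theorem containsProducts_of_monomialFn_mem (hC : IsClone C) (hplus : plusOp (ZMod p) ∈ C)
    {n j : ℕ} {e : Fin (n + 1) → ℕ} (he : ∀ i, e i < p) (hsum : ∑ i, e i = j + 1)
    (hmem : (⟨n, monomialFn e⟩ : Ops (ZMod p)) ∈ C) : ContainsProducts C j := by
  induction hM : ∑ i, (e i - 1) using Nat.strong_induction_on generalizing n with
  | _ M ih =>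
  by_cases hbig : ∃ i₀, 2 ≤ e i₀
  swap
  · push Not at hbig
    exact hC.containsProducts_of_monomialFn_mem_of_le_one (fun i => by have := hbig i; omega)
      hsum hmem
  obtain ⟨i₀, hi₀⟩ := hbig
  have hupdate : ∑ i, Function.update e i₀ (e i₀ - 1) i + 1 = ∑ i, e i := by
    rw [sum_update_of_mem (mem_univ _), sdiff_singleton_eq_erase,
      ← add_sum_erase _ e (mem_univ i₀)]
    omega
  refine ih _ ?_ (fun i => ?_) ?_
    (hC.monomialFn_cons_one_update_mem hplus he (i₀ := i₀) (by omega) hmem) rfl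
  · rw [← hM, Fin.sum_univ_succ]
    simp only [Fin.cons_zero, Fin.cons_succ, tsub_self, zero_add]
    refine sum_lt_sum (fun i _ => ?_) ⟨i₀, mem_univ _, by simp; omega⟩
    rcases eq_or_ne i i₀ with rfl | hi
    · simp
    · simp [hi]
  · refine Fin.cases (by simpa using (Fact.out : p.Prime).one_lt) (fun i => ?_) i
    rcases eq_or_ne i i₀ with rfl | hi
    · simpa using (Nat.sub_le _ _).trans_lt (he i)
    · simpa [hi] using he i
  · rw [Fin.sum_univ_succ]
    simp only [Fin.cons_zero, Fin.cons_succ]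
    omega

theorem exists_pos_containsProducts (hC : IsClone C) (hplus : plusOp (ZMod p) ∈ C)
    (haff : ¬ C ⊆ AffOps p) : ∃ s, 0 < s ∧ ContainsProducts C s := by
  obtain ⟨⟨n, f⟩, hf, hfA⟩ := Set.not_subset.mp haff
  obtain ⟨e, hc, he⟩ : ∃ e : Fin (n + 1) → Fin p,
      reducedCoeff (fun i => (e i : ℕ)) f ≠ 0 ∧ 2 ≤ ∑ i, (e i : ℕ) := by
    by_contra! h
    exact hfA (mem_affOps_of_reducedCoeff_ne_zero fun e hc => by have := h e hc; omega)
  have hlt : ∀ i, (e i : ℕ) < p := fun i => (e i).is_lt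
  exact ⟨_, by omega, hC.containsProducts_of_monomialFn_mem hplus hlt (j := ∑ i, (e i : ℕ) - 1)
    (by omega) (hC.monomialFn_mem_of_reducedCoeff_ne_zero hplus hf hlt hc)⟩

theorem exists_dvd_forall_containsProducts_iff (hC : IsClone C) (hplus : plusOp (ZMod p) ∈ C)
    (haff : ¬ C ⊆ AffOps p) : ∃ d, d ∣ p - 1 ∧ ∀ j, ContainsProducts C j ↔ d ∣ j := by
  obtain ⟨s, hs0, hs⟩ := hC.exists_pos_containsProducts hplus haff
  have hp := (Fact.out : p.Prime).one_lt
  refine AddSubmonoid.exists_mem_iff_dvd (S := hC.productDegrees) (by omega) (fun j => ?_) hs hs0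
  exact ContainsProducts.of_add fun a => by rw [Nat.sub_add_cancel hp.le, ZMod.pow_card]

theorem monomialFn_mem_iff_pow_eq (hC : IsClone C) (hplus : plusOp (ZMod p) ∈ C) {a : ZMod p}
    (ha : ∀ j, a ^ (j + 1) = a ↔ ContainsProducts C j) {n : ℕ}
    {F : (Fin (n + 1) → ZMod p) → ZMod p} (hF : F 0 = 0) {e : Fin (n + 1) → Fin p}
    (hc : reducedCoeff (fun i => (e i : ℕ)) F ≠ 0) :
    (⟨n, monomialFn fun i => (e i : ℕ)⟩ : Ops (ZMod p)) ∈ C ↔ a ^ ∑ i, (e i : ℕ) = a := by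
  obtain ⟨j, hj⟩ := Nat.exists_eq_add_of_le' (one_le_sum_of_reducedCoeff_ne_zero hF hc)
  rw [hj, ha]
  exact ⟨hC.containsProducts_of_monomialFn_mem hplus (fun i => (e i).is_lt) hj,
    fun h => h.monomialFn_mem hj⟩

end IsClone

theorem ZMod.exists_unit_pow_succ_eq_iff {p : ℕ} [Fact p.Prime] {d : ℕ} (hd : d ∣ p - 1) :
    ∃ a : (ZMod p)ˣ, ∀ j, (a : ZMod p) ^ (j + 1) = a ↔ d ∣ j := by
  have hp := (Fact.out : p.Prime).two_le
  obtain ⟨ζ, hζ⟩ := IsCyclic.exists_ofOrder_eq_natCard (α := (ZMod p)ˣ)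
  rw [Nat.card_eq_fintype_card, ZMod.card_units] at hζ
  have hquot : (p - 1) / d ≠ 0 :=
    (Nat.div_pos (Nat.le_of_dvd (by omega) hd) (Nat.pos_of_dvd_of_pos hd (by omega))).ne'
  refine ⟨ζ ^ ((p - 1) / d), fun j => ?_⟩
  rw [← Units.val_pow_eq_pow_val, Units.val_inj, pow_succ, mul_eq_right,
    ← orderOf_dvd_iff_pow_eq_one, orderOf_pow_of_dvd hquot (hζ.symm ▸ Nat.div_dvd_of_dvd hd), hζ,
    Nat.div_div_self hd (by omega)]

theorem preservesAut_toAddEquiv_iff {p : ℕ} (h : Ops (ZMod p)) (a : (ZMod p)ˣ) :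
    PreservesAut h (DistribMulAction.toAddEquiv (ZMod p) a) ↔
      ∀ x, h.2 (fun i => a * x i) = a * h.2 x := by
  simp [PreservesAut, Units.smul_def]

/-- Let `C` be a clone on `ZMod p` containing `+`, not contained in the
affine operations, all of whose operations preserve `{0}`. If `g` preserves `{0}` and
preserves every automorphism of `(ZMod p, +)` that is preserved by every operation of `C`,
then `g ∈ C`. -/
theorem statement17 (p : ℕ) (hp : p.Prime) (C : Set (Ops (ZMod p)))
    (hC : IsClone C) (hplus : plusOp (ZMod p) ∈ C) (haff : ¬ C ⊆ AffOps p)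
    (h0 : ∀ h ∈ C, Preserves0 h) (g : Ops (ZMod p)) (hg0 : Preserves0 g)
    (hgR : ∀ π : AddAut (ZMod p), (∀ h ∈ C, PreservesAut h π) → PreservesAut g π) :
    g ∈ C := by
  have := Fact.mk hp
  obtain ⟨d, hd, hdC⟩ := hC.exists_dvd_forall_containsProducts_iff hplus haff
  obtain ⟨a, ha⟩ := ZMod.exists_unit_pow_succ_eq_iff hd
  have hpow (j : ℕ) : (a : ZMod p) ^ (j + 1) = a ↔ ContainsProducts C j :=
    (ha j).trans (hdC j).symm
  have hCa (h : Ops (ZMod p)) (hh : h ∈ C) :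
      PreservesAut h (DistribMulAction.toAddEquiv (ZMod p) a) := by
    refine (preservesAut_toAddEquiv_iff h a).mpr <| (apply_mul_eq_mul_apply_iff _ _).mpr
      fun e hc => ?_
    exact (hC.monomialFn_mem_iff_pow_eq hplus hpow (h0 h hh) hc).mp
      (hC.monomialFn_mem_of_reducedCoeff_ne_zero hplus hh (fun i => (e i).is_lt) hc)
  have hga := (apply_mul_eq_mul_apply_iff _ g.2).mp
    ((preservesAut_toAddEquiv_iff g a).mp (hgR _ hCa))
  exact hC.mem_of_forall_reducedCoeff_ne_zero hplus fun e hc =>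
    (hC.monomialFn_mem_iff_pow_eq hplus hpow hg0 hc).mpr (hga e hc)
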